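/- Let X be a metric space, let f : X → X be an injective map which is Lipschitz with constant K < 1, and let y ∈ X be a fixed point of f. Let A ⊆ X be a nonempty set with f(A) ⊆ A such that A has no accumulation points in X (i.e., for every z ∈ X, z does not lie in the closure of A \ {z}). Then A = {y}. -/
import Mathlib

/-- Let `f` be an injective contraction of a metric space with fixed point `y`. If a
nonempty set `A` satisfies `f '' A ⊆ A` and has no accumulation points in `X`, then
`A = {y}`. -/
theorem invariant_discrete_set_eq_fixedPoint {X : Type*} [MetricSpace X]
    (f : X → X) (hf : Function.Injective f) (K : NNReal) (hK : K < 1)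
    (hL : LipschitzWith K f) (y : X) (hy : f y = y)
    (A : Set X) (hA : A.Nonempty) (hinv : f '' A ⊆ A)
    (hacc : ∀ z : X, z ∉ closure (A \ {z})) :
    A = {y} := by
  obtain ⟨a₀, ha₀⟩ := hA
  have key : ∀ a ∈ A, a = y := by
    intro a ha
    by_contra hne
    -- iterates stay in A
    have hmem : ∀ n, f^[n] a ∈ A := by
      intro n
      induction n with
      | zero => simpa using ha
      | succ n ih =>
        rw [Function.iterate_succ_apply']
        exact hinv ⟨_, ih, rfl⟩
    have hfix : ∀ n, f^[n] y = y := fun n => Function.iterate_fixed hy n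
    have hney : ∀ n, f^[n] a ≠ y := by
      intro n h
      exact hne ((hf.iterate n) (by rw [h, hfix n]))
    -- convergence to y
    have hdist : ∀ n, dist (f^[n] a) y ≤ (K : ℝ) ^ n * dist a y := by
      intro n
      have := (hL.iterate n).dist_le_mul a y
      simpa [hfix n, NNReal.coe_pow] using this
    have htend : Filter.Tendsto (fun n => f^[n] a) Filter.atTop (nhds y) := by
      rw [tendsto_iff_dist_tendsto_zero]
      refine squeeze_zero (fun n => dist_nonneg) hdist ?_
      have h1 : Filter.Tendsto (fun n : ℕ => (K : ℝ) ^ n) Filter.atTop (nhds 0) :=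
        tendsto_pow_atTop_nhds_zero_of_lt_one K.coe_nonneg (by exact_mod_cast hK)
      simpa using h1.mul_const (dist a y)
    have : y ∈ closure (A \ {y}) :=
      mem_closure_of_tendsto htend (Filter.Eventually.of_forall fun n => ⟨hmem n, hney n⟩)
    exact hacc y this
  have hyA : y ∈ A := key a₀ ha₀ ▸ ha₀
  ext x
  exact ⟨fun hx => key x hx, fun hx => hx ▸ hyA⟩
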